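/- arXiv:1402.0957 — 3 statements merged into one kernel-verified Lean document; each statement's English description precedes it below -/
import Mathlib

section
/- Let A and ΔA be real m×n matrices with rank(A) = n and ‖ΔA‖₂‖A†‖₂ ≤ 1/2, and set ε⊥ = ‖(I − AA†)ΔA‖₂/‖A‖₂ and κ = κ₂(A). Then for each j with ℓ_j > 0, |ℓ̃_j − ℓ_j|/ℓ_j ≤ 4(√((1−ℓ_j)/ℓ_j) + κ ε⊥/ℓ_j) κ ε⊥. -/
/-!
Let `p = A A†` and `q` be the orthogonal projectors onto the ranges of `A` and `A + ΔA`, and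
`e = e_j`, so that `ℓ_j = ⟪p e, e⟫` and `ℓ̃_j = ⟪q e, e⟫`. With `x = p e` and `y = (1 - p) e`
(so `‖x‖² = ℓ_j`, `‖y‖² = 1 - ℓ_j`) one has
`ℓ̃_j - ℓ_j = ‖q y‖² - ‖(1 - q) x‖² - 2 ⟪(1 - q) x, y⟫`,
so it suffices to bound `‖(1 - q) p‖` and `‖(1 - p) q‖` by `2 ‖A†‖ ‖(1 - p) ΔA‖ = 2 κ ε⊥`.
Both follow from `(1 - q)(A + ΔA) = 0`, resp. `range q = range (A + ΔA)`, once the condition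
`‖ΔA‖ ‖A†‖ ≤ 1/2` is used to absorb the terms in which `ΔA` reappears.
-/

open Matrix

/-- Spectral (two-)norm of a real rectangular matrix. -/
noncomputable def spec {m n : ℕ} (A : Matrix (Fin m) (Fin n) ℝ) : ℝ :=
  ‖LinearMap.toContinuousLinearMap (Matrix.toEuclideanLin A)‖

/-- Frobenius norm. -/
noncomputable def frob {m n : ℕ} (A : Matrix (Fin m) (Fin n) ℝ) : ℝ :=
  Real.sqrt (∑ i, ∑ j, (A i j) ^ 2)

/-- Leverage score: squared Euclidean norm of the j-th row. -/
noncomputable def lev {m n : ℕ} (Q : Matrix (Fin m) (Fin n) ℝ) (j : Fin m) : ℝ :=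
  ∑ k, (Q j k) ^ 2

/-- Euclidean norm of the j-th row. -/
noncomputable def rnorm {m n : ℕ} (A : Matrix (Fin m) (Fin n) ℝ) (j : Fin m) : ℝ :=
  Real.sqrt (∑ k, (A j k) ^ 2)

/-- Moore–Penrose inverse of a full column rank matrix. -/
noncomputable def pinv {m n : ℕ} (A : Matrix (Fin m) (Fin n) ℝ) : Matrix (Fin n) (Fin m) ℝ :=
  (Aᵀ * A)⁻¹ * Aᵀ

open RealInnerProductSpace ContinuousLinearMap

section StarProjection

variable {E : Type*} [NormedAddCommGroup E] [InnerProductSpace ℝ E] [CompleteSpace E]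
  {p q : E →L[ℝ] E}

theorem IsStarProjection.inner_apply_comm (hp : IsStarProjection p) (x y : E) :
    ⟪p x, y⟫ = ⟪x, p y⟫ := by
  rw [← adjoint_inner_right, ← star_eq_adjoint, hp.isSelfAdjoint.star_eq]

theorem IsStarProjection.apply_apply (hp : IsStarProjection p) (x : E) : p (p x) = p x := by
  rw [← mul_apply_eq_comp, hp.isIdempotentElem.eq]

theorem IsStarProjection.apply_eq_self_of_mem_range (hp : IsStarProjection p) {x : E}
    (hx : x ∈ p.range) : p x = x := by
  obtain ⟨y, rfl⟩ := hx
  exact hp.apply_apply y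

theorem IsStarProjection.inner_apply_self (hp : IsStarProjection p) (x : E) :
    ⟪p x, x⟫ = ‖p x‖ ^ 2 := by
  rw [← real_inner_self_eq_norm_sq, real_inner_comm]
  conv_rhs => rw [hp.inner_apply_comm, hp.apply_apply]

theorem IsStarProjection.inner_apply_self_sub (hp : IsStarProjection p)
    (hq : IsStarProjection q) (e : E) :
    ⟪q e, e⟫ - ⟪p e, e⟫ =
      ‖q ((1 - p) e)‖ ^ 2 - ‖(1 - q) (p e)‖ ^ 2 - 2 * ⟪(1 - q) (p e), (1 - p) e⟫ := by
  rw [hp.inner_apply_self, ← hq.inner_apply_self]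
  set x := p e
  set y := (1 - p) e
  have hxy : ⟪x, y⟫ = 0 := by
    rw [hp.inner_apply_comm, ← mul_apply_eq_comp, hp.mul_one_sub_self, _root_.zero_apply,
      inner_zero_right]
  have hqx : ⟪q x, x⟫ = ‖x‖ ^ 2 - ‖(1 - q) x‖ ^ 2 := by
    rw [← hq.one_sub.inner_apply_self, ← real_inner_self_eq_norm_sq, _root_.sub_apply,
      one_apply_eq_self, inner_sub_left]
    ring
  have hqxy : ⟪(1 - q) x, y⟫ = - ⟪q y, x⟫ := by
    rw [_root_.sub_apply, one_apply_eq_self, inner_sub_left, hxy, hq.inner_apply_comm,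
      real_inner_comm]
    ring
  have he : e = x + y := by simp [x, y]
  clear_value x y
  subst he
  simp only [map_add, inner_add_left, inner_add_right, hqx, hqxy]
  rw [hq.inner_apply_comm x y, real_inner_comm x]
  ring

theorem IsStarProjection.abs_inner_apply_self_sub_le (hp : IsStarProjection p)
    (hq : IsStarProjection q) {δ : ℝ} (hqp : ‖(1 - q) * p‖ ≤ δ) (hpq : ‖(1 - p) * q‖ ≤ δ)
    (e : E) :
    |⟪q e, e⟫ - ⟪p e, e⟫| ≤ 2 * δ * ‖p e‖ * ‖(1 - p) e‖ + δ ^ 2 * ‖e‖ ^ 2 := by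
  have hδ : 0 ≤ δ := (norm_nonneg _).trans hqp
  have hr : ‖(1 - q) (p e)‖ ≤ δ * ‖p e‖ :=
    calc ‖(1 - q) (p e)‖ = ‖((1 - q) * p) (p e)‖ := by rw [mul_apply_eq_comp, hp.apply_apply]
      _ ≤ δ * ‖p e‖ := le_of_opNorm_le _ hqp _
  have hw : ‖q ((1 - p) e)‖ ≤ δ * ‖(1 - p) e‖ := by
    have hstar : ‖q * (1 - p)‖ = ‖(1 - p) * q‖ := by
      rw [← norm_star, star_mul, hp.one_sub.isSelfAdjoint.star_eq, hq.isSelfAdjoint.star_eq]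
    calc ‖q ((1 - p) e)‖ = ‖(q * (1 - p)) ((1 - p) e)‖ := by
          rw [mul_apply_eq_comp, hp.one_sub.apply_apply]
      _ ≤ δ * ‖(1 - p) e‖ := le_of_opNorm_le _ (hstar ▸ hpq) _
  have hc := abs_real_inner_le_norm ((1 - q) (p e)) ((1 - p) e)
  have hpyth : ‖p e‖ ^ 2 + ‖(1 - p) e‖ ^ 2 = ‖e‖ ^ 2 := by
    rw [← hp.inner_apply_self, ← hp.one_sub.inner_apply_self, ← inner_add_left,
      _root_.sub_apply, one_apply_eq_self, add_sub_cancel, real_inner_self_eq_norm_sq]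
  have hr2 := pow_le_pow_left₀ (norm_nonneg _) hr 2
  have hw2 := pow_le_pow_left₀ (norm_nonneg _) hw 2
  have hrb := mul_le_mul_of_nonneg_right hr (norm_nonneg ((1 - p) e))
  rw [hp.inner_apply_self_sub hq, abs_le]
  constructor <;> nlinarith [abs_le.mp hc, mul_nonneg (mul_nonneg hδ (norm_nonneg (p e)))
    (norm_nonneg ((1 - p) e))]

theorem IsStarProjection.abs_inner_apply_self_sub_div_le (hp : IsStarProjection p)
    (hq : IsStarProjection q) {δ : ℝ} (hqp : ‖(1 - q) * p‖ ≤ δ) (hpq : ‖(1 - p) * q‖ ≤ δ)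
    {e : E} (he : ‖e‖ = 1) (hℓ : 0 < ⟪p e, e⟫) :
    |⟪q e, e⟫ - ⟪p e, e⟫| / ⟪p e, e⟫ ≤
      (2 * √((1 - ⟪p e, e⟫) / ⟪p e, e⟫) + δ / ⟪p e, e⟫) * δ := by
  have hbound := hp.abs_inner_apply_self_sub_le hq hqp hpq e
  have hcompl : 1 - ⟪p e, e⟫ = ‖(1 - p) e‖ ^ 2 := by
    rw [← hp.one_sub.inner_apply_self, _root_.sub_apply, one_apply_eq_self, inner_sub_left,
      real_inner_self_eq_norm_sq, he, one_pow]
  rw [hcompl, hp.inner_apply_self, ← div_pow, Real.sqrt_sq (by positivity)]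
  rw [hp.inner_apply_self] at hℓ
  rw [he, one_pow, mul_one, hp.inner_apply_self] at hbound
  calc |⟪q e, e⟫ - ‖p e‖ ^ 2| / ‖p e‖ ^ 2
      ≤ (2 * δ * ‖p e‖ * ‖(1 - p) e‖ + δ ^ 2) / ‖p e‖ ^ 2 := by gcongr
    _ = (2 * (‖(1 - p) e‖ / ‖p e‖) + δ / ‖p e‖ ^ 2) * δ := by
      field_simp

end StarProjection

section LeftInverse

variable {𝕜 E F : Type*} [NontriviallyNormedField 𝕜] [NormedAddCommGroup E] [NormedSpace 𝕜 E]
  [NormedAddCommGroup F] [NormedSpace 𝕜 F] {a d : F →L[𝕜] E} {b : E →L[𝕜] F}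

theorem norm_le_two_mul_norm_add_apply (hba : b ∘L a = 1) (hd : ‖d‖ * ‖b‖ ≤ 1 / 2) (v : F) :
    ‖v‖ ≤ 2 * ‖b‖ * ‖(a + d) v‖ := by
  have hv : v = b ((a + d) v) - b (d v) := by
    simp [← comp_apply b a, hba]
  have hbd : ‖b (d v)‖ ≤ 1 / 2 * ‖v‖ := by
    calc ‖b (d v)‖ ≤ ‖b‖ * (‖d‖ * ‖v‖) := le_opNorm_of_le _ (le_opNorm _ _)
      _ ≤ 1 / 2 * ‖v‖ := by rw [← mul_assoc, mul_comm ‖b‖]; gcongr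
  have hle := (norm_sub_le _ _).trans (add_le_add (le_opNorm b ((a + d) v)) hbd)
  rw [← hv] at hle
  linarith

end LeftInverse

section Perturbation

variable {E F : Type*} [NormedAddCommGroup E] [InnerProductSpace ℝ E] [CompleteSpace E]
  [NormedAddCommGroup F] [NormedSpace ℝ F] {q : E →L[ℝ] E} {a d : F →L[ℝ] E} {b : E →L[ℝ] F}

theorem IsStarProjection.norm_one_sub_mul_comp_le (hq : IsStarProjection q)
    (hrange : q.range = (a + d).range) (hd : ‖d‖ * ‖b‖ ≤ 1 / 2) :
    ‖(1 - q) * (a ∘L b)‖ ≤ 2 * ‖b‖ * ‖(1 - a ∘L b) ∘L d‖ := by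
  set t := ‖(1 - a ∘L b) ∘L d‖
  have hfix (v : F) : q (a v) + q (d v) = a v + d v := by
    simpa using hq.apply_eq_self_of_mem_range (x := (a + d) v) (hrange ▸ ⟨v, rfl⟩)
  set β := ‖(1 - q) ∘L d‖
  -- `(1 - q) a = -(1 - q) d` makes `β` appear on both sides; `‖d‖ ‖b‖ ≤ 1/2` absorbs it.
  have hβ : β ≤ t + β * (‖b‖ * ‖d‖) := by
    refine opNorm_le_bound _ (by positivity) fun v => ?_
    have hv : ((1 - q) ∘L d) v =
        (1 - q) (((1 - a ∘L b) ∘L d) v) - ((1 - q) ∘L d) (b (d v)) := by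
      simp only [ContinuousLinearMap.comp_apply, _root_.sub_apply, one_apply_eq_self, map_sub]
      linear_combination (norm := abel) -hfix (b (d v))
    calc ‖((1 - q) ∘L d) v‖
        ≤ ‖(1 - q) (((1 - a ∘L b) ∘L d) v)‖ + ‖((1 - q) ∘L d) (b (d v))‖ :=
          hv ▸ norm_sub_le _ _
      _ ≤ 1 * (t * ‖v‖) + β * (‖b‖ * (‖d‖ * ‖v‖)) := by
          gcongr
          · exact le_of_opNorm_le _ (IsStarProjection.norm_le _ hq.one_sub) _ |>.trans
              (by gcongr; exact le_opNorm _ _)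
          · exact le_opNorm_of_le _ (le_opNorm_of_le _ (le_opNorm _ _))
      _ = (t + β * (‖b‖ * ‖d‖)) * ‖v‖ := by ring
  have hβt : β ≤ 2 * t := by nlinarith [norm_nonneg ((1 - q) ∘L d)]
  have hqab : (1 - q) * (a ∘L b) = -(((1 - q) ∘L d) ∘L b) := by
    ext1 x
    simp only [mul_apply_eq_comp, ContinuousLinearMap.comp_apply, _root_.sub_apply,
      one_apply_eq_self, _root_.neg_apply]
    linear_combination (norm := abel) -hfix (b x)
  calc ‖(1 - q) * (a ∘L b)‖ ≤ β * ‖b‖ := hqab ▸ (norm_neg _).trans_le (opNorm_comp_le _ _)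
    _ ≤ 2 * ‖b‖ * t := by nlinarith [norm_nonneg b]

theorem IsStarProjection.norm_one_sub_comp_mul_le (hq : IsStarProjection q)
    (hrange : q.range = (a + d).range) (hba : b ∘L a = 1) (hd : ‖d‖ * ‖b‖ ≤ 1 / 2) :
    ‖(1 - a ∘L b) * q‖ ≤ 2 * ‖b‖ * ‖(1 - a ∘L b) ∘L d‖ := by
  refine opNorm_le_bound _ (by positivity) fun x => ?_
  obtain ⟨v, hv⟩ : q x ∈ (a + d).range := hrange ▸ ⟨x, rfl⟩
  have hqx : ((1 - a ∘L b) * q) x = ((1 - a ∘L b) ∘L d) v := by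
    rw [mul_apply_eq_comp, ← hv]
    simp [← ContinuousLinearMap.comp_apply b a, hba]
  calc ‖((1 - a ∘L b) * q) x‖ ≤ ‖(1 - a ∘L b) ∘L d‖ * ‖v‖ := hqx ▸ le_opNorm _ _
    _ ≤ ‖(1 - a ∘L b) ∘L d‖ * (2 * ‖b‖ * ‖q x‖) := by
        gcongr
        simpa [← hv] using norm_le_two_mul_norm_add_apply hba hd v
    _ ≤ ‖(1 - a ∘L b) ∘L d‖ * (2 * ‖b‖ * ‖x‖) := by
        gcongr
        simpa using le_of_opNorm_le q (IsStarProjection.norm_le _ hq) x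
    _ = 2 * ‖b‖ * ‖(1 - a ∘L b) ∘L d‖ * ‖x‖ := by ring

theorem IsStarProjection.abs_inner_apply_self_sub_div_le_of_comp_eq_one
    (hp : IsStarProjection (a ∘L b)) (hq : IsStarProjection q) (hrange : q.range = (a + d).range)
    (hba : b ∘L a = 1) (hd : ‖d‖ * ‖b‖ ≤ 1 / 2) {e : E} (he : ‖e‖ = 1)
    (hℓ : 0 < ⟪(a ∘L b) e, e⟫) :
    |⟪q e, e⟫ - ⟪(a ∘L b) e, e⟫| / ⟪(a ∘L b) e, e⟫ ≤
      4 * (√((1 - ⟪(a ∘L b) e, e⟫) / ⟪(a ∘L b) e, e⟫)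
        + ‖b‖ * ‖(1 - a ∘L b) ∘L d‖ / ⟪(a ∘L b) e, e⟫) * (‖b‖ * ‖(1 - a ∘L b) ∘L d‖) :=
  (hp.abs_inner_apply_self_sub_div_le hq (hq.norm_one_sub_mul_comp_le hrange hd)
    (hq.norm_one_sub_comp_mul_le hrange hba hd) he hℓ).trans_eq (by ring)

end Perturbation

namespace Matrix

variable {ι κ ν : Type*} [Fintype ι] [Fintype κ] [DecidableEq κ] [Fintype ν] [DecidableEq ν]

noncomputable def l2Op : Matrix ι κ ℝ ≃ₗ[ℝ] (EuclideanSpace ℝ κ →L[ℝ] EuclideanSpace ℝ ι) :=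
  toEuclideanLin.trans LinearMap.toContinuousLinearMap

@[simp]
theorem l2Op_apply (M : Matrix ι κ ℝ) (x : EuclideanSpace ℝ κ) :
    l2Op M x = WithLp.toLp 2 (M *ᵥ x.ofLp) := rfl

theorem l2Op_mul (M : Matrix ι κ ℝ) (N : Matrix κ ν ℝ) : l2Op (M * N) = l2Op M ∘L l2Op N := by
  ext1 x
  simp [mulVec_mulVec]

theorem l2Op_one [DecidableEq ι] : l2Op (1 : Matrix ι ι ℝ) = 1 := by
  ext1 x
  simp

theorem _root_.IsStarProjection.l2Op [DecidableEq ι] {P : Matrix ι ι ℝ}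
    (hP : IsStarProjection P) : IsStarProjection (l2Op P) :=
  hP.map (toEuclideanCLM (𝕜 := ℝ))

theorem inner_l2Op_single_single [DecidableEq ι] (M : Matrix ι ι ℝ) (i : ι) :
    ⟪l2Op M (EuclideanSpace.single i 1), EuclideanSpace.single i 1⟫ = M i i := by
  simp [EuclideanSpace.inner_single_right, mulVec_single]

theorem mem_range_l2Op {M : Matrix ι κ ℝ} {y : EuclideanSpace ℝ ι} :
    y ∈ (l2Op M).range ↔ y.ofLp ∈ M.mulVecLin.range := by
  constructor
  · rintro ⟨x, rfl⟩
    exact ⟨x.ofLp, rfl⟩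
  · rintro ⟨x, hx⟩
    exact ⟨WithLp.toLp 2 x, by simpa using congrArg (WithLp.toLp 2) hx⟩

theorem range_l2Op_eq_range_l2Op {M N : Matrix ι κ ℝ}
    (h : M.mulVecLin.range = N.mulVecLin.range) : (l2Op M).range = (l2Op N).range := by
  ext y
  rw [mem_range_l2Op, mem_range_l2Op, h]

theorem range_l2Op_mul_of_mul_eq_one {M : Matrix ι κ ℝ} {N : Matrix κ ν ℝ} {R : Matrix ν κ ℝ}
    (h : N * R = 1) : (l2Op (M * N)).range = (l2Op M).range := by
  rw [l2Op_mul, toLinearMap_comp, LinearMap.range_comp_of_range_eq_top]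
  refine LinearMap.range_eq_top.mpr fun x => ⟨l2Op R x, ?_⟩
  change (l2Op N ∘L l2Op R) x = x
  rw [← l2Op_mul, h, l2Op_one, one_apply_eq_self]

theorem isStarProjection_mul_transpose {Q : Matrix ι κ ℝ} (hQ : Qᵀ * Q = 1) :
    IsStarProjection (Q * Qᵀ) where
  isIdempotentElem := by
    rw [IsIdempotentElem, Matrix.mul_assoc, ← Matrix.mul_assoc Qᵀ, hQ, Matrix.one_mul]
  isSelfAdjoint := by
    rw [IsSelfAdjoint, star_eq_conjTranspose, conjTranspose_eq_transpose_of_trivial,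
      transpose_mul, transpose_transpose]

theorem isUnit_transpose_mul_self {R : Type*} [Field R] [LinearOrder R] [IsStrictOrderedRing R]
    {A : Matrix ι κ R} (hA : A.rank = Fintype.card κ) :
    IsUnit (Aᵀ * A) := by
  have hrange : (Aᵀ * A).mulVecLin.range = ⊤ :=
    Submodule.eq_top_of_finrank_eq (by rw [← rank, rank_transpose_mul_self, hA]; simp)
  exact mulVec_surjective_iff_isUnit.mp (LinearMap.range_eq_top.mp hrange)

end Matrix

section Leverage

variable {m n : ℕ} {A : Matrix (Fin m) (Fin n) ℝ}

theorem spec_eq_norm_l2Op (M : Matrix (Fin m) (Fin n) ℝ) : spec M = ‖l2Op M‖ := rfl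

theorem lev_eq_inner_l2Op (Q : Matrix (Fin m) (Fin n) ℝ) (j : Fin m) :
    lev Q j = ⟪l2Op (Q * Qᵀ) (EuclideanSpace.single j 1), EuclideanSpace.single j 1⟫ := by
  rw [inner_l2Op_single_single]
  simp [lev, mul_apply, sq]

theorem pinv_mul_self (hA : A.rank = n) : pinv A * A = 1 := by
  rw [pinv, Matrix.mul_assoc, nonsing_inv_mul]
  exact (isUnit_iff_isUnit_det _).mp (isUnit_transpose_mul_self (by rwa [Fintype.card_fin]))

theorem isStarProjection_mul_pinv (hA : A.rank = n) : IsStarProjection (A * pinv A) where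
  isIdempotentElem := by
    rw [IsIdempotentElem, Matrix.mul_assoc, ← Matrix.mul_assoc (pinv A), pinv_mul_self hA,
      Matrix.one_mul]
  isSelfAdjoint := by
    rw [IsSelfAdjoint, star_eq_conjTranspose, conjTranspose_eq_transpose_of_trivial, pinv,
      ← Matrix.mul_assoc, transpose_mul, transpose_mul, transpose_nonsing_inv, transpose_mul,
      transpose_transpose, Matrix.mul_assoc]

theorem mul_pinv_eq_mul_transpose (hA : A.rank = n) {Q : Matrix (Fin m) (Fin n) ℝ}
    (hQ : Qᵀ * Q = 1) (hrQ : Q.mulVecLin.range = A.mulVecLin.range) :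
    A * pinv A = Q * Qᵀ := by
  refine l2Op.injective <| (isStarProjection_mul_pinv hA).l2Op.ext
    (isStarProjection_mul_transpose hQ).l2Op ?_
  rw [range_l2Op_mul_of_mul_eq_one (pinv_mul_self hA), range_l2Op_mul_of_mul_eq_one hQ,
    range_l2Op_eq_range_l2Op hrQ]

end Leverage

theorem stmt10 {m n : ℕ} (A ΔA : Matrix (Fin m) (Fin n) ℝ)
    (hA : A.rank = n) (hpert : spec ΔA * spec (pinv A) ≤ 1 / 2)
    (Q Qt : Matrix (Fin m) (Fin n) ℝ)
    (hQ : Qᵀ * Q = 1) (hQt : Qtᵀ * Qt = 1)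
    (hrQ : LinearMap.range Q.mulVecLin = LinearMap.range A.mulVecLin)
    (hrQt : LinearMap.range Qt.mulVecLin = LinearMap.range (A + ΔA).mulVecLin) :
    ∀ j, 0 < lev Q j →
      |lev Qt j - lev Q j| / lev Q j ≤
        4 * (Real.sqrt ((1 - lev Q j) / lev Q j)
          + spec A * spec (pinv A) * (spec ((1 - A * pinv A) * ΔA) / spec A) / lev Q j)
        * (spec A * spec (pinv A) * (spec ((1 - A * pinv A) * ΔA) / spec A)) := by
  intro j hℓ
  rw [lev_eq_inner_l2Op, ← mul_pinv_eq_mul_transpose hA hQ hrQ, l2Op_mul A (pinv A)] at hℓ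
  rw [lev_eq_inner_l2Op, lev_eq_inner_l2Op, ← mul_pinv_eq_mul_transpose hA hQ hrQ]
  have hA0 : ‖l2Op A‖ ≠ 0 := fun h => by
    simp [(LinearEquiv.map_eq_zero_iff _).mp (norm_eq_zero.mp h)] at hℓ
  have hκε : spec A * spec (pinv A) * (spec ((1 - A * pinv A) * ΔA) / spec A) =
      ‖l2Op (pinv A)‖ * ‖(1 - l2Op A ∘L l2Op (pinv A)) ∘L l2Op ΔA‖ := by
    simp only [spec_eq_norm_l2Op, l2Op_mul, map_sub, l2Op_one]
    field_simp
  rw [hκε, l2Op_mul A (pinv A)]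
  have hp : IsStarProjection (l2Op A ∘L l2Op (pinv A)) :=
    l2Op_mul A (pinv A) ▸ (isStarProjection_mul_pinv hA).l2Op
  have hrange : (l2Op (Qt * Qtᵀ)).range = (l2Op A + l2Op ΔA).range := by
    rw [range_l2Op_mul_of_mul_eq_one hQt, ← map_add, range_l2Op_eq_range_l2Op hrQt]
  have hba : l2Op (pinv A) ∘L l2Op A = 1 := by rw [← l2Op_mul, pinv_mul_self hA, l2Op_one]
  have hd : ‖l2Op ΔA‖ * ‖l2Op (pinv A)‖ ≤ 1 / 2 := hpert
  exact hp.abs_inner_apply_self_sub_div_le_of_comp_eq_one (isStarProjection_mul_transpose hQt).l2Op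
    hrange hba hd (by simp) hℓ
end

section
/- If Q and Q+ΔQ are m×n real matrices with orthonormal columns and leverage scores ℓ_j, ℓ̃_j respectively, then for each j with ℓ_j > 0, |ℓ̃_j − ℓ_j|/ℓ_j ≤ (2√((1−ℓ_j)/ℓ_j) + ‖ΔQ‖₂/ℓ_j) ‖ΔQ‖₂. -/
/-!
Write `q = Qᵀ eⱼ` and `δ = ΔQᵀ eⱼ` for the `j`-th rows, so that `ℓ̃ⱼ - ℓⱼ = 2 ⟨q, δ⟩ + ‖δ‖²`.
Splitting `eⱼ = u + Q q` with `u = (I - QQᵀ) eⱼ`, of squared norm `1 - ℓⱼ`, gives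
`⟨q, δ⟩ = ⟨u, ΔQ q⟩ + ⟨Q q, ΔQ q⟩`. Orthonormality of the columns of both `Q` and `Q + ΔQ`
turns the second term into `-‖ΔQ q‖² / 2`, while Cauchy–Schwarz bounds the first by
`√(1 - ℓⱼ) ‖ΔQ‖₂ √ℓⱼ`. Since `‖ΔQ q‖²` and `‖δ‖²` both lie in `[0, ‖ΔQ‖₂²]`,
`|ℓ̃ⱼ - ℓⱼ| ≤ 2 √(ℓⱼ (1 - ℓⱼ)) ‖ΔQ‖₂ + ‖ΔQ‖₂²`, and dividing by `ℓⱼ` gives the claim.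
-/

open Matrix

open scoped Matrix.Norms.L2Operator

section DotProduct

variable {ι κ ν R : Type*} [Fintype ι] [Fintype κ]

lemma dotProduct_self_nonneg_of_real (x : ι → ℝ) : 0 ≤ x ⬝ᵥ x :=
  Finset.sum_nonneg fun i _ => mul_self_nonneg (x i)

lemma sq_dotProduct_le (x y : ι → ℝ) : (x ⬝ᵥ y) ^ 2 ≤ (x ⬝ᵥ x) * (y ⬝ᵥ y) := by
  simpa only [dotProduct, sq] using Finset.sum_mul_sq_le_sq_mul_sq Finset.univ x y

lemma norm_euclideanSpaceEquiv_symm_sq (x : ι → ℝ) :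
    ‖(EuclideanSpace.equiv ι ℝ).symm x‖ ^ 2 = x ⬝ᵥ x := by
  rw [EuclideanSpace.real_norm_sq_eq]
  simp [dotProduct, sq]

lemma mulVec_dotProduct_mulVec [CommSemiring R] [Fintype ν] (A : Matrix ι κ R)
    (B : Matrix ι ν R) (x : κ → R) (y : ν → R) :
    A *ᵥ x ⬝ᵥ B *ᵥ y = x ⬝ᵥ (Aᵀ * B) *ᵥ y := by
  rw [← mulVec_mulVec, dotProduct_mulVec x, vecMul_transpose]

end DotProduct

section OrthonormalColumns

variable {ι κ : Type*} [Fintype ι] [Fintype κ] [DecidableEq κ] {Q Δ : Matrix ι κ ℝ}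

lemma mulVec_dotProduct_self_of_transpose_mul_self (hQ : Qᵀ * Q = 1) (x : κ → ℝ) :
    Q *ᵥ x ⬝ᵥ Q *ᵥ x = x ⬝ᵥ x := by
  rw [mulVec_dotProduct_mulVec, hQ, one_mulVec]

lemma two_mul_mulVec_dotProduct_add_eq_zero (hQ : Qᵀ * Q = 1)
    (hQΔ : (Q + Δ)ᵀ * (Q + Δ) = 1) (x : κ → ℝ) :
    2 * (Q *ᵥ x ⬝ᵥ Δ *ᵥ x) + Δ *ᵥ x ⬝ᵥ Δ *ᵥ x = 0 := by
  have h := mulVec_dotProduct_self_of_transpose_mul_self hQΔ x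
  rw [add_mulVec, add_dotProduct, dotProduct_add, dotProduct_add,
    mulVec_dotProduct_self_of_transpose_mul_self hQ, dotProduct_comm (Δ *ᵥ x)] at h
  linarith

lemma sub_mulVec_transpose_mulVec_dotProduct_self (hQ : Qᵀ * Q = 1) (e : ι → ℝ) :
    (e - Q *ᵥ (Qᵀ *ᵥ e)) ⬝ᵥ (e - Q *ᵥ (Qᵀ *ᵥ e)) = e ⬝ᵥ e - Qᵀ *ᵥ e ⬝ᵥ Qᵀ *ᵥ e := by
  have h : e ⬝ᵥ Q *ᵥ (Qᵀ *ᵥ e) = Qᵀ *ᵥ e ⬝ᵥ Qᵀ *ᵥ e := by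
    rw [dotProduct_mulVec, ← mulVec_transpose]
  rw [sub_dotProduct, dotProduct_sub, dotProduct_sub, dotProduct_comm (Q *ᵥ _) e, h,
    mulVec_dotProduct_self_of_transpose_mul_self hQ]
  ring

end OrthonormalColumns

section Leverage

variable {m n : ℕ}

lemma lev_eq_dotProduct (Q : Matrix (Fin m) (Fin n) ℝ) (j : Fin m) : lev Q j = Q j ⬝ᵥ Q j := by
  simp only [lev, dotProduct, sq]

lemma transpose_mulVec_single_one (Q : Matrix (Fin m) (Fin n) ℝ) (j : Fin m) :
    Qᵀ *ᵥ Pi.single j 1 = Q j := by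
  rw [mulVec_single_one]
  rfl

lemma lev_add_sub_lev (Q Δ : Matrix (Fin m) (Fin n) ℝ) (j : Fin m) :
    lev (Q + Δ) j - lev Q j = 2 * (Q j ⬝ᵥ Δ j) + Δ j ⬝ᵥ Δ j := by
  rw [lev_eq_dotProduct, lev_eq_dotProduct, show (Q + Δ) j = Q j + Δ j from rfl, add_dotProduct,
    dotProduct_add, dotProduct_add, dotProduct_comm (Δ j)]
  ring

lemma lev_nonneg (Q : Matrix (Fin m) (Fin n) ℝ) (j : Fin m) : 0 ≤ lev Q j :=
  lev_eq_dotProduct Q j ▸ dotProduct_self_nonneg_of_real (Q j)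

lemma single_sub_mulVec_dotProduct_self {Q : Matrix (Fin m) (Fin n) ℝ} (hQ : Qᵀ * Q = 1)
    (j : Fin m) :
    (Pi.single j 1 - Q *ᵥ Q j) ⬝ᵥ (Pi.single j 1 - Q *ᵥ Q j) = 1 - lev Q j := by
  have h := sub_mulVec_transpose_mulVec_dotProduct_self hQ (Pi.single j 1)
  rwa [transpose_mulVec_single_one, single_one_dotProduct, Pi.single_eq_same,
    ← lev_eq_dotProduct] at h

lemma lev_le_one {Q : Matrix (Fin m) (Fin n) ℝ} (hQ : Qᵀ * Q = 1) (j : Fin m) : lev Q j ≤ 1 := by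
  linarith [single_sub_mulVec_dotProduct_self hQ j,
    dotProduct_self_nonneg_of_real (Pi.single j 1 - Q *ᵥ Q j)]

lemma spec_eq_norm (A : Matrix (Fin m) (Fin n) ℝ) : spec A = ‖A‖ := rfl

lemma spec_nonneg (A : Matrix (Fin m) (Fin n) ℝ) : 0 ≤ spec A := norm_nonneg _

lemma spec_transpose (A : Matrix (Fin m) (Fin n) ℝ) : spec Aᵀ = spec A := by
  rw [spec_eq_norm, spec_eq_norm, ← conjTranspose_eq_transpose_of_trivial,
    l2_opNorm_conjTranspose]

lemma mulVec_dotProduct_self_le (A : Matrix (Fin m) (Fin n) ℝ) (x : Fin n → ℝ) :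
    A *ᵥ x ⬝ᵥ A *ᵥ x ≤ spec A ^ 2 * (x ⬝ᵥ x) := by
  rw [← norm_euclideanSpaceEquiv_symm_sq, ← norm_euclideanSpaceEquiv_symm_sq, ← mul_pow]
  exact pow_le_pow_left₀ (norm_nonneg _) (A.l2_opNorm_mulVec _) 2

lemma lev_le_spec_sq (A : Matrix (Fin m) (Fin n) ℝ) (j : Fin m) : lev A j ≤ spec A ^ 2 := by
  have h := mulVec_dotProduct_self_le Aᵀ (Pi.single j 1)
  rwa [transpose_mulVec_single_one, ← lev_eq_dotProduct, spec_transpose, single_one_dotProduct,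
    Pi.single_eq_same, mul_one] at h

theorem abs_lev_add_sub_lev_le {Q Δ : Matrix (Fin m) (Fin n) ℝ} (hQ : Qᵀ * Q = 1)
    (hQΔ : (Q + Δ)ᵀ * (Q + Δ) = 1) (j : Fin m) :
    |lev (Q + Δ) j - lev Q j| ≤
      2 * (Real.sqrt (lev Q j * (1 - lev Q j)) * spec Δ) + spec Δ ^ 2 := by
  set ℓ := lev Q j
  set ε := spec Δ
  set q := Q j
  set u := Pi.single j 1 - Q *ᵥ q
  have hsplit : q ⬝ᵥ Δ j = u ⬝ᵥ Δ *ᵥ q + Q *ᵥ q ⬝ᵥ Δ *ᵥ q := by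
    calc q ⬝ᵥ Δ j = Pi.single j 1 ⬝ᵥ Δ *ᵥ q := by
          rw [single_one_dotProduct, dotProduct_comm]; rfl
      _ = u ⬝ᵥ Δ *ᵥ q + Q *ᵥ q ⬝ᵥ Δ *ᵥ q := by rw [← add_dotProduct, sub_add_cancel]
  have hcross := two_mul_mulVec_dotProduct_add_eq_zero hQ hQΔ q
  have huu : u ⬝ᵥ u = 1 - ℓ := single_sub_mulVec_dotProduct_self hQ j
  have hN : Δ *ᵥ q ⬝ᵥ Δ *ᵥ q ≤ ε ^ 2 * ℓ := by
    rw [show ℓ = q ⬝ᵥ q from lev_eq_dotProduct Q j]; exact mulVec_dotProduct_self_le Δ q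
  have hR : |u ⬝ᵥ Δ *ᵥ q| ≤ Real.sqrt (ℓ * (1 - ℓ)) * ε := by
    refine abs_le_of_sq_le_sq ?_ (mul_nonneg (Real.sqrt_nonneg _) (spec_nonneg Δ))
    rw [mul_pow, Real.sq_sqrt (mul_nonneg (lev_nonneg Q j) (sub_nonneg.2 (lev_le_one hQ j)))]
    calc (u ⬝ᵥ Δ *ᵥ q) ^ 2 ≤ (u ⬝ᵥ u) * (Δ *ᵥ q ⬝ᵥ Δ *ᵥ q) := sq_dotProduct_le _ _
      _ ≤ (1 - ℓ) * (ε ^ 2 * ℓ) := by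
        rw [huu]; exact mul_le_mul_of_nonneg_left hN (sub_nonneg.2 (lev_le_one hQ j))
      _ = ℓ * (1 - ℓ) * ε ^ 2 := by ring
  have hN' : Δ *ᵥ q ⬝ᵥ Δ *ᵥ q ≤ ε ^ 2 :=
    hN.trans (mul_le_of_le_one_right (sq_nonneg ε) (lev_le_one hQ j))
  have hD : Δ j ⬝ᵥ Δ j ≤ ε ^ 2 := lev_eq_dotProduct Δ j ▸ lev_le_spec_sq Δ j
  rw [lev_add_sub_lev, hsplit, abs_le]
  have hR' := abs_le.1 hR
  constructor <;> linarith [dotProduct_self_nonneg_of_real (Δ *ᵥ q),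
    dotProduct_self_nonneg_of_real (Δ j)]

end Leverage

theorem stmt12 {m n : ℕ} (Q ΔQ : Matrix (Fin m) (Fin n) ℝ)
    (hQ : Qᵀ * Q = 1) (hQt : (Q + ΔQ)ᵀ * (Q + ΔQ) = 1) :
    ∀ j, 0 < lev Q j →
      |lev (Q + ΔQ) j - lev Q j| / lev Q j ≤
        (2 * Real.sqrt ((1 - lev Q j) / lev Q j) + spec ΔQ / lev Q j) * spec ΔQ := by
  intro j hℓ
  have key := abs_lev_add_sub_lev_le hQ hQt j
  set ℓ := lev Q j
  have hsqrt : Real.sqrt (ℓ * (1 - ℓ)) = Real.sqrt ((1 - ℓ) / ℓ) * ℓ := by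
    rw [show ℓ * (1 - ℓ) = (1 - ℓ) / ℓ * ℓ ^ 2 by field_simp, Real.sqrt_mul' _ (sq_nonneg ℓ),
      Real.sqrt_sq hℓ.le]
  rw [div_le_iff₀ hℓ]
  calc |lev (Q + ΔQ) j - ℓ| ≤ 2 * (Real.sqrt (ℓ * (1 - ℓ)) * spec ΔQ) + spec ΔQ ^ 2 := key
    _ = (2 * Real.sqrt ((1 - ℓ) / ℓ) + spec ΔQ / ℓ) * spec ΔQ * ℓ := by
        rw [hsqrt]; field_simp
end

section
/- Let P be the orthogonal projector onto range(A) for a real m×n matrix A of rank n, and let ΔA be any m×n matrix with ‖ΔA‖₂‖A†‖₂ < 1. Define M = A + P ΔA. Then rank(M) = n and range(M) = range(A), so A and M have the same leverage scores. -/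
open Matrix

/-!
With `P = A A†`, the perturbed matrix factors as `A + P ΔA = A (1 + A† ΔA)`, and
`‖A† ΔA‖₂ ≤ ‖ΔA‖₂ ‖A†‖₂ < 1` makes `1 + A† ΔA` invertible (Neumann series). Right multiplication
by an invertible matrix preserves rank and column space, and it leaves `A A†` unchanged because
`(A N)† = N⁻¹ A†`.
-/

open scoped Matrix.Norms.L2Operator

lemma spec_eq_l2_opNorm {m n : ℕ} (A : Matrix (Fin m) (Fin n) ℝ) : spec A = ‖A‖ := rfl

lemma isUnit_one_add_mul_of_spec_mul_spec_lt_one {m n : ℕ} (B : Matrix (Fin n) (Fin m) ℝ)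
    (D : Matrix (Fin m) (Fin n) ℝ) (h : spec D * spec B < 1) : IsUnit (1 + B * D) := by
  have hBD : ‖-(B * D)‖ < 1 := by
    rw [norm_neg]
    calc ‖B * D‖ ≤ ‖B‖ * ‖D‖ := l2_opNorm_mul B D
      _ < 1 := by rwa [mul_comm, ← spec_eq_l2_opNorm, ← spec_eq_l2_opNorm]
  simpa only [sub_neg_eq_add] using isUnit_one_sub_of_norm_lt_one hBD

lemma Matrix.range_mulVecLin_mul_of_isUnit {l m R : Type*} [CommRing R] [Fintype m]
    [DecidableEq m] (A : Matrix l m R) {N : Matrix m m R} (hN : IsUnit N) :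
    LinearMap.range (A * N).mulVecLin = LinearMap.range A.mulVecLin := by
  rw [Matrix.mulVecLin_mul]
  exact LinearMap.range_comp_of_range_eq_top _ <|
    LinearMap.range_eq_top.mpr (Matrix.mulVec_surjective_iff_isUnit.mpr hN)

lemma pinv_mul_of_isUnit_det {m n : ℕ} (A : Matrix (Fin m) (Fin n) ℝ)
    {N : Matrix (Fin n) (Fin n) ℝ} (hN : IsUnit N.det) : pinv (A * N) = N⁻¹ * pinv A := by
  have hNt : IsUnit Nᵀ.det := by rwa [det_transpose]
  rw [pinv, pinv, transpose_mul, Matrix.mul_assoc, ← Matrix.mul_assoc Aᵀ, Matrix.mul_inv_rev,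
    Matrix.mul_inv_rev, Matrix.mul_assoc, Matrix.mul_assoc, ← Matrix.mul_assoc Nᵀ⁻¹,
    nonsing_inv_mul _ hNt, Matrix.one_mul]

lemma mul_pinv_mul_of_isUnit_det {m n : ℕ} (A : Matrix (Fin m) (Fin n) ℝ)
    {N : Matrix (Fin n) (Fin n) ℝ} (hN : IsUnit N.det) : A * N * pinv (A * N) = A * pinv A := by
  rw [pinv_mul_of_isUnit_det A hN, Matrix.mul_assoc, ← Matrix.mul_assoc N, mul_nonsing_inv _ hN,
    Matrix.one_mul]

theorem stmt18 {m n : ℕ} (A ΔA : Matrix (Fin m) (Fin n) ℝ)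
    (hA : A.rank = n) (h : spec ΔA * spec (pinv A) < 1) :
    (A + A * pinv A * ΔA).rank = n ∧
    LinearMap.range (A + A * pinv A * ΔA).mulVecLin = LinearMap.range A.mulVecLin ∧
    ∀ j, ((A + A * pinv A * ΔA) * pinv (A + A * pinv A * ΔA)) j j = (A * pinv A) j j := by
  set N := 1 + pinv A * ΔA
  have hN : IsUnit N := isUnit_one_add_mul_of_spec_mul_spec_lt_one _ _ h
  have hNdet : IsUnit N.det := (isUnit_iff_isUnit_det N).mp hN
  have hM : A + A * pinv A * ΔA = A * N := by
    rw [Matrix.mul_add, Matrix.mul_one, Matrix.mul_assoc]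
  rw [hM]
  exact ⟨(rank_mul_eq_left_of_isUnit_det N A hNdet).trans hA,
    A.range_mulVecLin_mul_of_isUnit hN,
    fun j => by rw [mul_pinv_mul_of_isUnit_det A hNdet]⟩
end
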